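/- Let (Σ, A, X, L, l₀, Δ) be a register automaton and w, w' : X → Σ valuations. Then ⟨l, [w]⟩ ⇝ ⟨l', [w']⟩ if and only if there is a transition (l, α, g, π, l') ∈ Δ, a valuation v ∈ [w], a valuation v' ∈ [w'], and d̄ ∈ Σ^n (n the arity of α) such that v, d̄ ⊨ g and v' ∈ ⟦π⟧_{v,d̄}; equivalently, if and only if some transition (l, α, g, π, l') ∈ Δ admits a joint witness (v, v', d̄) in which v has the same equality pattern as w (including equalities with constants of C), v' has the same equality pattern as w', v, d̄ ⊨ g, and v'(x_{k_i}) equals the value of e_{l_i} under (v, d̄) for every assigned register x_{k_i} of π. -/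
import Mathlib


/-- A term over registers `X`, formal parameters `p₁,…,pₙ`, and constants from the alphabet. -/
inductive Term (X Sig : Type) (n : ℕ) where
  | reg (x : X)
  | par (i : Fin n)
  | const (c : Sig)

/-- The value of a term under a register valuation `v` and parameter valuation `d`. -/
def Term.val {X Sig : Type} {n : ℕ} (v : X → Sig) (d : Fin n → Sig) : Term X Sig n → Sig
  | .reg x => v x
  | .par i => d i
  | .const c => c

/-- All constants occurring in the term belong to `C`. -/
def Term.ConstIn {X Sig : Type} {n : ℕ} (C : Finset Sig) : Term X Sig n → Prop
  | .const c => c ∈ C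
  | _ => True

/-- An atomic guard: an equality `e = f` or a disequality `e ≠ f` between terms. -/
inductive Atom (X Sig : Type) (n : ℕ) where
  | eq (e f : Term X Sig n)
  | ne (e f : Term X Sig n)

/-- Satisfaction of an atomic guard. -/
def Atom.Sat {X Sig : Type} {n : ℕ} (v : X → Sig) (d : Fin n → Sig) : Atom X Sig n → Prop
  | .eq e f => Term.val v d e = Term.val v d f
  | .ne e f => Term.val v d e ≠ Term.val v d f

def Atom.ConstIn {X Sig : Type} {n : ℕ} (C : Finset Sig) : Atom X Sig n → Prop
  | .eq e f => Term.ConstIn C e ∧ Term.ConstIn C f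
  | .ne e f => Term.ConstIn C e ∧ Term.ConstIn C f

/-- A guard is a finite conjunction of atomic guards. -/
abbrev Guard (X Sig : Type) (n : ℕ) : Type := List (Atom X Sig n)

/-- `v, d ⊨ g`: every conjunct of the guard holds. -/
def Guard.Sat {X Sig : Type} {n : ℕ} (v : X → Sig) (d : Fin n → Sig) (g : Guard X Sig n) : Prop :=
  ∀ a ∈ g, Atom.Sat v d a

def Guard.ConstIn {X Sig : Type} {n : ℕ} (C : Finset Sig) (g : Guard X Sig n) : Prop :=
  ∀ a ∈ g, Atom.ConstIn C a

/-- An assignment `(x_{k_1} … x_{k_m}) ↦ (e_{l_1} … e_{l_m})`, as a list of pairs. -/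
abbrev Assignment (X Sig : Type) (n : ℕ) : Type := List (X × Term X Sig n)

/-- The assigned registers are pairwise distinct. -/
def Assignment.Wf {X Sig : Type} {n : ℕ} (π : Assignment X Sig n) : Prop :=
  (List.map Prod.fst π).Nodup

/-- `⟦π⟧_{v,d}`: the set of valuations `v'` with `v' (x_{k_i})` the value of `e_{l_i}` under `(v,d)`. -/
def Assignment.Sem {X Sig : Type} {n : ℕ} (π : Assignment X Sig n) (v : X → Sig)
    (d : Fin n → Sig) : Set (X → Sig) :=
  {v' | ∀ p ∈ π, v' p.1 = Term.val v d p.2}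

def Assignment.ConstIn {X Sig : Type} {n : ℕ} (C : Finset Sig) (π : Assignment X Sig n) : Prop :=
  ∀ p ∈ π, Term.ConstIn C (p.2 : Term X Sig n)
/-- `u ∼_C v`: there is an automorphism (bijection) of the alphabet which is invariant on the
constants `C` and maps `u` to `v` pointwise. -/
def EquivC {X Sig : Type} (C : Finset Sig) (u v : X → Sig) : Prop :=
  ∃ σ : Equiv.Perm Sig, (∀ c ∈ C, σ c = c) ∧ ∀ x, σ (u x) = v x

/-- `[v]`: the `∼_C` equivalence class of the valuation `v`. -/
def eqClass {X Sig : Type} (C : Finset Sig) (v : X → Sig) : Set (X → Sig) :=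
  {u | EquivC C u v}
/-- A transition `(l, α, g, π, l')` of a register automaton. -/
structure Transition (Sig X A L : Type) (arity : A → ℕ) where
  src : L
  act : A
  guard : Guard X Sig (arity act)
  assign : Assignment X Sig (arity act)
  tgt : L

def Transition.ConstIn {Sig X A L : Type} {arity : A → ℕ} (C : Finset Sig)
    (t : Transition Sig X A L arity) : Prop :=
  Guard.ConstIn C t.guard ∧ Assignment.ConstIn C t.assign

/-- A register automaton `(Σ, A, X, L, l₀, Δ)` over constants `C`: each action has an arity,
there is an initial location, and a finite set of transitions whose guards and assignments
only mention constants of `C` and assign pairwise distinct registers. -/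
structure RegisterAutomaton (Sig X A L : Type) (C : Finset Sig) where
  arity : A → ℕ
  init : L
  Δ : Set (Transition Sig X A L arity)
  finΔ : Δ.Finite
  wf : ∀ t ∈ Δ, Transition.ConstIn C t ∧ Assignment.Wf t.assign

/-- `⟨l, v⟩ →^{α(d)} ⟨l', v'⟩`: some transition `(l, α, g, π, l') ∈ Δ` satisfies
`v, d ⊨ g` and `v' ∈ ⟦π⟧_{v,d}`. -/
def RegisterAutomaton.Step {Sig X A L : Type} {C : Finset Sig}
    (RA : RegisterAutomaton Sig X A L C) (l : L) (v : X → Sig) (α : A)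
    (d : Fin (RA.arity α) → Sig) (l' : L) (v' : X → Sig) : Prop :=
  ∃ (g : Guard X Sig (RA.arity α)) (π : Assignment X Sig (RA.arity α)),
    (⟨l, α, g, π, l'⟩ : Transition Sig X A L RA.arity) ∈ RA.Δ ∧
      Guard.Sat v d g ∧ v' ∈ Assignment.Sem π v d

/-- One step on configurations, for some data symbol `α(d)`. -/
def RegisterAutomaton.StepAny {Sig X A L : Type} {C : Finset Sig}
    (RA : RegisterAutomaton Sig X A L C) (c c' : L × (X → Sig)) : Prop :=
  ∃ (α : A) (d : Fin (RA.arity α) → Sig), RA.Step c.1 c.2 α d c'.1 c'.2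

/-- A configuration `⟨l, v⟩` is reachable: there is a run from the initial location
(with an arbitrary initial valuation) ending in `⟨l, v⟩`. -/
def RegisterAutomaton.Reachable {Sig X A L : Type} {C : Finset Sig}
    (RA : RegisterAutomaton Sig X A L C) (l : L) (v : X → Sig) : Prop :=
  ∃ v₀ : X → Sig, Relation.ReflTransGen RA.StepAny (RA.init, v₀) (l, v)

/-- `⟨l, S⟩ ⇝ ⟨l', S'⟩` for sets of valuations (representative configurations):
every member of `S` steps to some member of `S'` and vice versa. -/
def RegisterAutomaton.RepStep {Sig X A L : Type} {C : Finset Sig}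
    (RA : RegisterAutomaton Sig X A L C) (l : L) (S : Set (X → Sig)) (l' : L)
    (S' : Set (X → Sig)) : Prop :=
  (∀ u ∈ S, ∃ u' ∈ S', ∃ (α : A) (d : Fin (RA.arity α) → Sig), RA.Step l u α d l' u') ∧
  (∀ u' ∈ S', ∃ u ∈ S, ∃ (α : A) (d : Fin (RA.arity α) → Sig), RA.Step l u α d l' u')
/-- Two valuations have the same equality pattern: equalities among registers and
equalities with constants of `C` coincide. -/
def SamePattern {X Sig : Type} (C : Finset Sig) (u v : X → Sig) : Prop :=
  (∀ x y : X, u x = u y ↔ v x = v y) ∧ ∀ x : X, ∀ c ∈ C, (u x = c ↔ v x = c)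


section AuxProof
variable {Sig X A L : Type}

lemma Term.val_perm {n : ℕ} {C : Finset Sig} (σ : Equiv.Perm Sig) (hσ : ∀ c ∈ C, σ c = c)
    (v : X → Sig) (d : Fin n → Sig) {e : Term X Sig n} (he : Term.ConstIn C e) :
    Term.val (σ ∘ v) (σ ∘ d) e = σ (Term.val v d e) := by
  cases e with
  | reg x => rfl
  | par i => rfl
  | const c => exact (hσ c he).symm

lemma step_perm {A L : Type} {C : Finset Sig} (RA : RegisterAutomaton Sig X A L C)
    {l l' : L} {α : A} {d : Fin (RA.arity α) → Sig} {v v' : X → Sig}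
    (σ : Equiv.Perm Sig) (hσ : ∀ c ∈ C, σ c = c)
    (h : RA.Step l v α d l' v') : RA.Step l (σ ∘ v) α (σ ∘ d) l' (σ ∘ v') := by
  obtain ⟨g, π, hΔ, hg, hπ⟩ := h
  obtain ⟨⟨hgC, hπC⟩, -⟩ := RA.wf _ hΔ
  refine ⟨g, π, hΔ, ?_, ?_⟩
  · intro a ha
    have hC := hgC a ha
    have hs := hg a ha
    cases a with
    | eq e f =>
      show Term.val (σ ∘ v) (σ ∘ d) e = Term.val (σ ∘ v) (σ ∘ d) f
      rw [Term.val_perm σ hσ v d hC.1, Term.val_perm σ hσ v d hC.2]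
      exact congrArg σ hs
    | ne e f =>
      show Term.val (σ ∘ v) (σ ∘ d) e ≠ Term.val (σ ∘ v) (σ ∘ d) f
      rw [Term.val_perm σ hσ v d hC.1, Term.val_perm σ hσ v d hC.2]
      exact fun h2 => hs (σ.injective h2)
  · intro p hp
    show σ (v' p.1) = Term.val (σ ∘ v) (σ ∘ d) p.2
    rw [Term.val_perm σ hσ v d (hπC p hp)]
    exact congrArg σ (hπ p hp)

lemma equivC_refl (C : Finset Sig) (v : X → Sig) : EquivC C v v :=
  ⟨Equiv.refl Sig, fun _ _ => rfl, fun _ => rfl⟩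

lemma equivC_perm {C : Finset Sig} {v w : X → Sig} (σ : Equiv.Perm Sig)
    (hσC : ∀ c ∈ C, σ c = c) (h : EquivC C v w) : EquivC C (σ ∘ v) w := by
  obtain ⟨τ, hτC, hτ⟩ := h
  refine ⟨σ.symm.trans τ, fun c hc => ?_, fun x => ?_⟩
  · show τ (σ.symm c) = c
    rw [σ.symm_apply_eq.2 (hσC c hc).symm]
    exact hτC c hc
  · show τ (σ.symm (σ (v x))) = w x
    rw [σ.symm_apply_apply]
    exact hτ x

lemma equivC_exists_perm {C : Finset Sig} {u v w : X → Sig}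
    (hu : EquivC C u w) (hv : EquivC C v w) :
    ∃ σ : Equiv.Perm Sig, (∀ c ∈ C, σ c = c) ∧ σ ∘ v = u := by
  obtain ⟨σ₁, h1C, h1⟩ := hu
  obtain ⟨σ₂, h2C, h2⟩ := hv
  refine ⟨σ₂.trans σ₁.symm, fun c hc => ?_, funext fun x => ?_⟩
  · show σ₁.symm (σ₂ c) = c
    rw [h2C c hc]
    exact σ₁.symm_apply_eq.2 (h1C c hc).symm
  · show σ₁.symm (σ₂ (v x)) = u x
    rw [h2 x]
    exact σ₁.symm_apply_eq.2 (h1 x).symm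

lemma samePattern_symm {C : Finset Sig} {v w : X → Sig} (h : SamePattern C v w) :
    SamePattern C w v :=
  ⟨fun x y => (h.1 x y).symm, fun x c hc => (h.2 x c hc).symm⟩

lemma samePattern_fun {C : Finset Sig} {v w : X → Sig} (hp : SamePattern C v w) :
    ∃ F : Sig → Sig, (∀ x, F (v x) = w x) ∧ ∀ c ∈ C, F c = c := by
  classical
  refine ⟨fun a => if h : a ∈ Set.range v then w h.choose else a, fun x => ?_, fun c hc => ?_⟩
  · have h : v x ∈ Set.range v := ⟨x, rfl⟩
    simp only [dif_pos h]
    exact (hp.1 h.choose x).1 h.choose_spec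
  · by_cases h : c ∈ Set.range v
    · simp only [dif_pos h]
      exact (hp.2 h.choose c hc).1 h.choose_spec
    · simp only [dif_neg h]

lemma exists_perm_extend [Infinite Sig] {S T : Set Sig} (hS : S.Finite) (hT : T.Finite)
    (e : ↥S ≃ ↥T) : ∃ σ : Equiv.Perm Sig, ∀ (a : Sig) (h : a ∈ S), σ a = e ⟨a, h⟩ := by
  classical
  have hS' : Cardinal.mk ↥S < Cardinal.mk Sig := hS.lt_aleph0.trans_le (Cardinal.aleph0_le_mk Sig)
  have hT' : Cardinal.mk ↥T < Cardinal.mk Sig := hT.lt_aleph0.trans_le (Cardinal.aleph0_le_mk Sig)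
  obtain ⟨ec⟩ := Cardinal.eq.1 (Cardinal.mk_compl_eq_mk_compl_infinite hS' hT')
  refine ⟨(Equiv.Set.sumCompl S).symm.trans ((e.sumCongr ec).trans (Equiv.Set.sumCompl T)), ?_⟩
  intro a h
  have h1 : (Equiv.Set.sumCompl S).symm a = Sum.inl ⟨a, h⟩ :=
    Equiv.Set.sumCompl_symm_apply_of_mem h
  simp [Equiv.trans_apply, h1]

lemma equivC_iff_samePattern [Infinite Sig] [Finite X] (C : Finset Sig) (v w : X → Sig) :
    EquivC C v w ↔ SamePattern C v w := by
  constructor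
  · rintro ⟨σ, hσC, hσ⟩
    refine ⟨fun x y => ?_, fun x c hc => ?_⟩
    · rw [← hσ x, ← hσ y]
      exact (Equiv.apply_eq_iff_eq σ).symm
    · constructor
      · intro h
        rw [← hσ x, h]
        exact hσC c hc
      · intro h
        apply σ.injective
        rw [hσ x, h, hσC c hc]
  · intro hp
    classical
    obtain ⟨F, Fv, FC⟩ := samePattern_fun hp
    obtain ⟨G, Gw, GC⟩ := samePattern_fun (samePattern_symm hp)
    set S : Set Sig := Set.range v ∪ ↑C with hSdef
    set T : Set Sig := Set.range w ∪ ↑C with hTdef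
    have hS : S.Finite := (Set.finite_range v).union C.finite_toSet
    have hT : T.Finite := (Set.finite_range w).union C.finite_toSet
    have hFmem : ∀ a ∈ S, F a ∈ T := by
      rintro a (⟨x, rfl⟩ | hc)
      · rw [Fv x]; exact Or.inl ⟨x, rfl⟩
      · rw [FC a hc]; exact Or.inr hc
    have hGmem : ∀ b ∈ T, G b ∈ S := by
      rintro b (⟨x, rfl⟩ | hc)
      · rw [Gw x]; exact Or.inl ⟨x, rfl⟩
      · rw [GC b hc]; exact Or.inr hc
    have hGF : ∀ a ∈ S, G (F a) = a := by
      rintro a (⟨x, rfl⟩ | hc)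
      · rw [Fv x, Gw x]
      · rw [FC a hc, GC a hc]
    have hFG : ∀ b ∈ T, F (G b) = b := by
      rintro b (⟨x, rfl⟩ | hc)
      · rw [Gw x, Fv x]
      · rw [GC b hc, FC b hc]
    let e : ↥S ≃ ↥T :=
      { toFun := fun a => ⟨F a, hFmem a a.2⟩
        invFun := fun b => ⟨G b, hGmem b b.2⟩
        left_inv := fun a => Subtype.ext (hGF a a.2)
        right_inv := fun b => Subtype.ext (hFG b b.2) }
    obtain ⟨σ, hσ⟩ := exists_perm_extend hS hT e
    refine ⟨σ, fun c hc => ?_, fun x => ?_⟩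
    · rw [hσ c (Or.inr hc)]
      exact FC c hc
    · rw [hσ (v x) (Or.inl ⟨x, rfl⟩)]
      exact Fv x

end AuxProof

/-- `⟨l, [w]⟩ ⇝ ⟨l', [w']⟩` iff some transition `(l, α, g, π, l') ∈ Δ` admits a joint witness
`(v, v', d̄)` with `v ∈ [w]`, `v' ∈ [w']`, `v, d̄ ⊨ g`, and `v' ∈ ⟦π⟧_{v,d̄}`; equivalently,
iff some transition admits such a witness where `v` has the same equality pattern as `w`
and `v'` has the same equality pattern as `w'`. -/
theorem repStep_iff_consistent_witness {Sig X A L : Type} [Infinite Sig] [Finite X] [Finite A]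
    [Finite L] {C : Finset Sig} (RA : RegisterAutomaton Sig X A L C) (l l' : L)
    (w w' : X → Sig) :
    (RA.RepStep l (eqClass C w) l' (eqClass C w') ↔
      ∃ (α : A) (g : Guard X Sig (RA.arity α)) (π : Assignment X Sig (RA.arity α))
        (v v' : X → Sig) (d : Fin (RA.arity α) → Sig),
        (⟨l, α, g, π, l'⟩ : Transition Sig X A L RA.arity) ∈ RA.Δ ∧
          v ∈ eqClass C w ∧ v' ∈ eqClass C w' ∧ Guard.Sat v d g ∧ v' ∈ Assignment.Sem π v d) ∧
    (RA.RepStep l (eqClass C w) l' (eqClass C w') ↔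
      ∃ (α : A) (g : Guard X Sig (RA.arity α)) (π : Assignment X Sig (RA.arity α))
        (v v' : X → Sig) (d : Fin (RA.arity α) → Sig),
        (⟨l, α, g, π, l'⟩ : Transition Sig X A L RA.arity) ∈ RA.Δ ∧
          SamePattern C v w ∧ SamePattern C v' w' ∧ Guard.Sat v d g ∧
          v' ∈ Assignment.Sem π v d) := by
  have core : RA.RepStep l (eqClass C w) l' (eqClass C w') ↔
      ∃ (α : A) (g : Guard X Sig (RA.arity α)) (π : Assignment X Sig (RA.arity α))
        (v v' : X → Sig) (d : Fin (RA.arity α) → Sig),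
        (⟨l, α, g, π, l'⟩ : Transition Sig X A L RA.arity) ∈ RA.Δ ∧
          v ∈ eqClass C w ∧ v' ∈ eqClass C w' ∧ Guard.Sat v d g ∧
          v' ∈ Assignment.Sem π v d := by
    constructor
    · rintro ⟨h1, -⟩
      obtain ⟨u', hu', α, d, g, π, hΔ, hg, hπ⟩ := h1 w (equivC_refl C w)
      exact ⟨α, g, π, w, u', d, hΔ, equivC_refl C w, hu', hg, hπ⟩
    · rintro ⟨α, g, π, v, v', d, hΔ, hv, hv', hg, hπ⟩
      have hstep : RA.Step l v α d l' v' := ⟨g, π, hΔ, hg, hπ⟩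
      constructor
      · intro u hu
        obtain ⟨σ, hσC, hσv⟩ := equivC_exists_perm hu hv
        refine ⟨σ ∘ v', equivC_perm σ hσC hv', α, σ ∘ d, ?_⟩
        rw [← hσv]
        exact step_perm RA σ hσC hstep
      · intro u' hu'
        obtain ⟨σ, hσC, hσv'⟩ := equivC_exists_perm hu' hv'
        refine ⟨σ ∘ v, equivC_perm σ hσC hv, α, σ ∘ d, ?_⟩
        rw [← hσv']
        exact step_perm RA σ hσC hstep
  refine ⟨core, core.trans ?_⟩
  constructor
  · rintro ⟨α, g, π, v, v', d, hΔ, hv, hv', hg, hπ⟩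
    exact ⟨α, g, π, v, v', d, hΔ, (equivC_iff_samePattern C v w).1 hv,
      (equivC_iff_samePattern C v' w').1 hv', hg, hπ⟩
  · rintro ⟨α, g, π, v, v', d, hΔ, hv, hv', hg, hπ⟩
    exact ⟨α, g, π, v, v', d, hΔ, (equivC_iff_samePattern C v w).2 hv,
      (equivC_iff_samePattern C v' w').2 hv', hg, hπ⟩
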